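/- arXiv:2303.08208 — 2 statements merged into one kernel-verified Lean document; each statement's English description precedes it below -/
import Mathlib

section
/- For integers n ≥ 2, m ≥ 0 with 2m + n - 3 > 0, and l ≥ 1, the product B(n,l,m)⁻¹ = ∏_{p=1}^{l} (2(m+2p)+n-3)/(2(m+2p)+n-1) satisfies B(n,l,m)⁻¹ ≥ (1 + 4l/(2m+n-3))^{-1/2}. -/
/-!
Write `a = 2m + n - 3 > 0`, so that the `p`-th factor is `(a + 4p) / (a + 4p + 2)`. Squaring,
it suffices that the squared partial products `P_l²` dominate `a / (a + 4l)`. This follows by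
induction on `l`, since passing from `l` to `l + 1` multiplies `a / (a + 4l)` by
`x / (x + 4)` with `x = a + 4l`, and `x / (x + 4) ≤ ((x + 4) / (x + 6))²` is the cubic
inequality `x (x + 6)² ≤ (x + 4)³`.
-/

lemma div_add_four_le_div_add_six_sq {x : ℝ} (hx : 0 ≤ x) :
    x / (x + 4) ≤ ((x + 4) / (x + 6)) ^ 2 := by
  rw [div_pow, div_le_div_iff₀ (by positivity) (by positivity)]
  nlinarith

lemma div_add_four_mul_le_sq_prod {a : ℝ} (ha : 0 < a) (l : ℕ) :
    a / (a + 4 * l) ≤ (∏ p ∈ Finset.Icc 1 l, (a + 4 * p) / (a + 4 * p + 2)) ^ 2 := by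
  induction l with
  | zero => simp [ha.ne']
  | succ k ih =>
    have hk : 0 < a + 4 * k := by positivity
    have hsplit :
        a / (a + 4 * (k + 1 : ℕ)) = a / (a + 4 * k) * ((a + 4 * k) / (a + 4 * k + 4)) := by
      push_cast
      field_simp
      ring
    have hstep : (a + 4 * k) / (a + 4 * k + 4)
        ≤ ((a + 4 * (k + 1 : ℕ)) / (a + 4 * (k + 1 : ℕ) + 2)) ^ 2 :=
      calc _ ≤ _ := div_add_four_le_div_add_six_sq hk.le
        _ = _ := by push_cast; ring
    rw [Finset.prod_Icc_succ_top (by omega), mul_pow, hsplit]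
    exact mul_le_mul ih hstep (by positivity) (by positivity)

lemma rpow_neg_half_le_of_inv_le_sq {x P : ℝ} (hx : 0 < x) (hP : 0 ≤ P) (h : x⁻¹ ≤ P ^ 2) :
    x ^ (-(1 / 2) : ℝ) ≤ P := by
  rw [Real.rpow_neg hx.le, ← Real.sqrt_eq_rpow, ← Real.sqrt_inv]
  exact Real.sqrt_le_iff.mpr ⟨hP, h⟩

theorem stmt_1_general (n m : ℤ) (h : (0:ℤ) < 2 * m + n - 3)
    (l : ℕ) :
    (∏ p ∈ Finset.Icc 1 l,
        ((2 * ((m : ℝ) + 2 * p) + n - 3) / (2 * ((m : ℝ) + 2 * p) + n - 1)))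
      ≥ (1 + 4 * (l : ℝ) / (2 * (m : ℝ) + n - 3)) ^ (-(1/2) : ℝ) := by
  set a : ℝ := 2 * (m : ℝ) + n - 3 with ha_def
  have ha : 0 < a := by
    have : (0 : ℝ) < ((2 * m + n - 3 : ℤ) : ℝ) := by exact_mod_cast h
    simpa [a] using this
  have hfactor : ∀ p : ℕ, (2 * ((m : ℝ) + 2 * p) + n - 3) / (2 * ((m : ℝ) + 2 * p) + n - 1)
      = (a + 4 * p) / (a + 4 * p + 2) := fun p => by rw [ha_def]; ring
  simp only [hfactor]
  refine rpow_neg_half_le_of_inv_le_sq (by positivity)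
    (Finset.prod_nonneg fun p _ => by positivity) ?_
  have hinv : (1 + 4 * (l : ℝ) / a)⁻¹ = a / (a + 4 * l) := by field_simp
  exact hinv ▸ div_add_four_mul_le_sq_prod ha l

/-- `B(n,l,m)⁻¹ = ∏_{p=1}^{l} (2(m+2p)+n-3)/(2(m+2p)+n-1) ≥ (1 + 4l/(2m+n-3))^{-1/2}`. -/
theorem stmt_1 (n m : ℤ) (hn : 2 ≤ n) (hm : 0 ≤ m) (h : (0:ℤ) < 2 * m + n - 3)
    (l : ℕ) (hl : 1 ≤ l) :
    (∏ p ∈ Finset.Icc 1 l,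
        ((2 * ((m : ℝ) + 2 * p) + n - 3) / (2 * ((m : ℝ) + 2 * p) + n - 1)))
      ≥ (1 + 4 * (l : ℝ) / (2 * (m : ℝ) + n - 3)) ^ (-(1/2) : ℝ) :=
  stmt_1_general n m h l
end

section
/- Telescoping product bound: for n ≥ 2, m ≥ 0 integers with 2m+n-3 > 0 and l ≥ 1, the product ∏_{p=1}^{l} (2(m+2p)+n-3)/(2(m+2p)+n-1) satisfies ∏_{p=1}^{l} (2(m+2p)+n-3)/(2(m+2p)+n-1) ≥ (2m+n-3)^{1/2} / (2m+4l+n-1)^{1/2} · c for some c > 0 independent of l; in particular the product is bounded below by a constant times l^{-1/2}. -/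
private lemma key_ineq (t : ℝ) (ht : 1 ≤ t) :
    Real.sqrt ((t - 1) / (t + 3)) ≤ t / (t + 2) := by
  have h2 : (0:ℝ) < t + 2 := by linarith
  have h3 : (0:ℝ) < t + 3 := by linarith
  rw [show t / (t + 2) = Real.sqrt ((t / (t + 2))^2) from
    (Real.sqrt_sq (by positivity)).symm]
  apply Real.sqrt_le_sqrt
  rw [div_pow, div_le_div_iff₀ h3 (by positivity)]
  nlinarith

private lemma main_bound (a : ℝ) (ha : 0 < a) (l : ℕ) :
    Real.sqrt (a + 3) / Real.sqrt (a + 4 * l + 3)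
      ≤ ∏ p ∈ Finset.Icc 1 l, (a + 4 * p) / (a + 4 * p + 2) := by
  induction l with
  | zero =>
    rw [show Finset.Icc 1 0 = (∅ : Finset ℕ) from rfl, Finset.prod_empty]
    rw [show a + 4 * ((0:ℕ):ℝ) + 3 = a + 3 by push_cast; ring,
      div_self (ne_of_gt (Real.sqrt_pos.mpr (by linarith)))]
  | succ l ih =>
    rw [Finset.prod_Icc_succ_top (Nat.succ_le_succ (Nat.zero_le l))]
    have h3 : (0:ℝ) < a + 4 * l + 3 := by positivity
    have h7 : (0:ℝ) < a + 4 * l + 7 := by linarith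
    have hs3 : (0:ℝ) < Real.sqrt (a + 4 * l + 3) := Real.sqrt_pos.mpr h3
    have hkey : Real.sqrt ((a + 4 * l + 3) / (a + 4 * l + 7))
        ≤ (a + 4 * ((l:ℕ)+1:ℕ)) / (a + 4 * ((l:ℕ)+1:ℕ) + 2) := by
      have h := key_ineq (a + 4 * l + 4) (by linarith)
      have e1 : a + 4 * (l:ℝ) + 4 - 1 = a + 4 * l + 3 := by ring
      have e2 : a + 4 * (l:ℝ) + 4 + 3 = a + 4 * l + 7 := by ring
      rw [e1, e2] at h
      push_cast
      refine h.trans_eq ?_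
      ring
    have heq : Real.sqrt (a + 3) / Real.sqrt (a + 4 * ((l:ℕ)+1:ℕ) + 3)
        = (Real.sqrt (a + 3) / Real.sqrt (a + 4 * l + 3))
          * Real.sqrt ((a + 4 * l + 3) / (a + 4 * l + 7)) := by
      rw [Real.sqrt_div h3.le, show a + 4 * (((l:ℕ)+1:ℕ):ℝ) + 3 = a + 4 * l + 7 by
        push_cast; ring]
      field_simp
    rw [heq]
    apply mul_le_mul ih hkey (Real.sqrt_nonneg _)
    refine le_trans ?_ ih
    positivity

/-- Telescoping product bound: for some constants `c, c' > 0` independent of `l`, the product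
`∏_{p=1}^{l} (2m+4p+n-3)/(2m+4p+n-1)` is at least `√(2m+n-3)/√(2m+4l+n-1) · c`, and in
particular is bounded below by a constant times `l^{-1/2}`. -/
theorem stmt_15 (n m : ℤ) (hn : 2 ≤ n) (hm : 0 ≤ m) (h : (0:ℤ) < 2 * m + n - 3) :
    ∃ c : ℝ, 0 < c ∧ ∃ c' : ℝ, 0 < c' ∧ ∀ l : ℕ, 1 ≤ l →
      ((∏ p ∈ Finset.Icc 1 l,
          ((2 * (m : ℝ) + 4 * p + n - 3) / (2 * (m : ℝ) + 4 * p + n - 1)))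
        ≥ Real.sqrt (2 * (m : ℝ) + n - 3) / Real.sqrt (2 * (m : ℝ) + 4 * l + n - 1) * c)
      ∧ ((∏ p ∈ Finset.Icc 1 l,
          ((2 * (m : ℝ) + 4 * p + n - 3) / (2 * (m : ℝ) + 4 * p + n - 1)))
        ≥ c' * (l : ℝ) ^ (-(1/2) : ℝ)) := by
  set a : ℝ := 2 * (m:ℝ) + n - 3 with ha_def
  have ha : 0 < a := by
    have : (0:ℝ) < 2 * (m:ℝ) + (n:ℝ) - 3 := by exact_mod_cast h
    linarith [this]
  have hs2 : (0:ℝ) < Real.sqrt 2 := Real.sqrt_pos.mpr (by norm_num)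
  refine ⟨(Real.sqrt 2)⁻¹, by positivity, Real.sqrt (a+3) / Real.sqrt (a+7),
    by positivity, fun l hl => ?_⟩
  have hprod_eq : (∏ p ∈ Finset.Icc 1 l,
      ((2 * (m : ℝ) + 4 * p + n - 3) / (2 * (m : ℝ) + 4 * p + n - 1)))
      = ∏ p ∈ Finset.Icc 1 l, (a + 4 * p) / (a + 4 * p + 2) :=
    Finset.prod_congr rfl (fun p _ => by rw [ha_def]; ring_nf)
  have hmain := main_bound a ha l
  rw [hprod_eq]
  have hl1 : (1:ℝ) ≤ (l:ℝ) := by exact_mod_cast hl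
  have h3 : (0:ℝ) < a + 4 * l + 3 := by positivity
  constructor
  · -- first bound
    refine le_trans ?_ hmain
    have hrw : 2 * (m:ℝ) + 4 * l + (n:ℝ) - 1 = a + 4 * l + 2 := by rw [ha_def]; ring
    rw [hrw]
    have h2 : (0:ℝ) < a + 4 * l + 2 := by positivity
    have hs : (0:ℝ) < Real.sqrt (a + 4 * l + 2) := Real.sqrt_pos.mpr h2
    have heq : Real.sqrt a / Real.sqrt (a + 4 * l + 2) * (Real.sqrt 2)⁻¹
        = Real.sqrt a / Real.sqrt (2 * (a + 4 * l + 2)) := by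
      rw [Real.sqrt_mul (by norm_num : (0:ℝ) ≤ 2)]
      ring
    rw [heq]
    exact div_le_div₀ (Real.sqrt_nonneg _) (Real.sqrt_le_sqrt (by linarith))
      (Real.sqrt_pos.mpr h3) (Real.sqrt_le_sqrt (by linarith))
  · -- second bound
    refine le_trans ?_ hmain
    have hrpow : (l : ℝ) ^ (-(1/2) : ℝ) = (Real.sqrt l)⁻¹ := by
      rw [Real.rpow_neg (Nat.cast_nonneg l), Real.sqrt_eq_rpow]
    have hsl : (0:ℝ) < Real.sqrt l := Real.sqrt_pos.mpr (by linarith)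
    have hs7 : (0:ℝ) < Real.sqrt (a + 7) := Real.sqrt_pos.mpr (by linarith)
    have heq : Real.sqrt (a+3) / Real.sqrt (a+7) * (Real.sqrt l)⁻¹
        = Real.sqrt (a+3) / Real.sqrt ((a + 7) * l) := by
      rw [Real.sqrt_mul (by linarith : (0:ℝ) ≤ a + 7)]
      ring
    rw [hrpow, heq]
    exact div_le_div₀ (Real.sqrt_nonneg _) le_rfl (Real.sqrt_pos.mpr h3)
      (Real.sqrt_le_sqrt (by nlinarith))
end
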